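/- Let k ∈ ℕ and let f : ℕ → ℕ be a polynomial function with coefficients in ℕ ∪ {0} (mapping positive naturals to positive naturals) that is NOT continuous as a map from the Macías space M(ℕ) to itself. Then the function h(x) := x^k · f(x) is also not continuous as a map from M(ℕ) to itself. -/

import Mathlib

/-!
Monomials `c x ^ j` are continuous for the Macías topology, so a discontinuous polynomial function
`f` has two nonzero coefficients: `f = X ^ j (c + X R)` with `c ≠ 0` and `R ≠ 0`. For `N ≥ c`,
evaluating at `y = c N!` gives `f(y) = y ^ j c (1 + N! R(y))`, so a prime `q > N` divides `f(y)`
although `q ∤ y`. Taking `N` beyond the degree, `f` is also nonzero modulo `q` at some `x` prime to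
`q`. For `h(x) = x ^ k f(x)`, the preimage of `σ_q` then contains `x`; were it open, it would
contain a whole `σ_M`, hence every prime `p > M`, but by Dirichlet's theorem one of them is
`≡ y (mod q)`, so `q ∣ h(p)`.
-/

open Topology

/-- For `n` a positive natural, `σ_n = {m ∈ ℕ⁺ : gcd(n,m) = 1}`. -/
def sigmaSet (n : ℕ+) : Set ℕ+ := {m : ℕ+ | Nat.Coprime (n : ℕ) (m : ℕ)}

/-- The Macías topology `τ_M` on the positive naturals, generated by the sets `σ_n`. -/
def tauM : TopologicalSpace ℕ+ :=
  TopologicalSpace.generateFrom (Set.range sigmaSet)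

/-- `f : ℕ⁺ → ℕ⁺` is a polynomial function with coefficients in `ℕ ∪ {0}`. -/
def IsPolyFun (f : ℕ+ → ℕ+) : Prop :=
  ∃ (n : ℕ) (a : ℕ → ℕ),
    ∀ x : ℕ+, (f x : ℕ) = ∑ k ∈ Finset.range (n + 1), a k * (x : ℕ) ^ k

open Polynomial

lemma isOpen_sigmaSet (n : ℕ+) : IsOpen[tauM] (sigmaSet n) :=
  TopologicalSpace.GenerateOpen.basic _ ⟨n, rfl⟩

lemma sigmaSet_mul (m n : ℕ+) : sigmaSet (m * n) = sigmaSet m ∩ sigmaSet n := by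
  ext x
  simp [sigmaSet, Nat.coprime_mul_iff_left]

lemma exists_sigmaSet_subset {U : Set ℕ+} (hU : IsOpen[tauM] U) (hne : U.Nonempty) :
    ∃ M : ℕ+, sigmaSet M ⊆ U := by
  obtain ⟨x, hx⟩ := hne
  induction hU with
  | basic s hs =>
    obtain ⟨n, rfl⟩ := hs
    exact ⟨n, subset_rfl⟩
  | univ => exact ⟨1, Set.subset_univ _⟩
  | inter U V _ _ ihU ihV =>
    obtain ⟨M, hM⟩ := ihU hx.1
    obtain ⟨M', hM'⟩ := ihV hx.2
    exact ⟨M * M', sigmaSet_mul M M' ▸ Set.inter_subset_inter hM hM'⟩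
  | sUnion S _ ih =>
    obtain ⟨s, hsS, hxs⟩ := hx
    obtain ⟨M, hM⟩ := ih s hsS hxs
    exact ⟨M, hM.trans (Set.subset_sUnion_of_mem hsS)⟩

lemma prime_mem_sigmaSet {M p : ℕ+} (hp : (p : ℕ).Prime) (hMp : (M : ℕ) < p) :
    p ∈ sigmaSet M :=
  (Nat.coprime_of_lt_prime M.ne_zero hMp hp).symm

theorem not_continuous_of_dvd_of_modEq {g : ℕ+ → ℕ+} {q : ℕ} (hq : q.Prime) {x : ℕ+}
    (hx : ¬ q ∣ g x) {y : ℕ} (hy : ¬ q ∣ y) (hgy : ∀ z : ℕ+, (z : ℕ) ≡ y [MOD q] → q ∣ g z) :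
    ¬ Continuous[tauM, tauM] g := by
  intro hg
  let Q : ℕ+ := ⟨q, hq.pos⟩
  have hxQ : x ∈ g ⁻¹' sigmaSet Q := hq.coprime_iff_not_dvd.mpr hx
  obtain ⟨M, hM⟩ := exists_sigmaSet_subset (continuous_def.mp hg _ (isOpen_sigmaSet Q)) ⟨x, hxQ⟩
  obtain ⟨p, hMp, hp, hpy⟩ :=
    Nat.forall_exists_prime_gt_and_modEq M hq.ne_zero (hq.coprime_iff_not_dvd.mpr hy).symm
  have hpQ : (⟨p, hp.pos⟩ : ℕ+) ∈ g ⁻¹' sigmaSet Q := hM (prime_mem_sigmaSet hp hMp)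
  exact hq.coprime_iff_not_dvd.mp hpQ (hgy _ hpy)

theorem continuous_of_coe_eq_mul_pow {f : ℕ+ → ℕ+} {c j : ℕ}
    (hf : ∀ x, (f x : ℕ) = c * (x : ℕ) ^ j) : Continuous[tauM, tauM] f := by
  refine continuous_generateFrom_iff.mpr ?_
  rintro _ ⟨m, rfl⟩
  have hpre : f ⁻¹' sigmaSet m =
      {_x : ℕ+ | Nat.Coprime m c} ∩ {x : ℕ+ | Nat.Coprime m ((x : ℕ) ^ j)} := by
    ext x
    simp only [sigmaSet, Set.mem_preimage, Set.mem_ofPred_eq, Set.mem_inter_iff, hf,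
      Nat.coprime_mul_iff_right]
  rw [hpre]
  refine @IsOpen.inter _ tauM _ _ (@isOpen_const _ tauM _) ?_
  rcases j.eq_zero_or_pos with rfl | hj
  · simp only [pow_zero, Nat.coprime_one_right_eq_true, Set.ofPred_true]
    exact @isOpen_univ _ tauM
  · simp only [Nat.coprime_pow_right_iff hj]
    exact isOpen_sigmaSet m

theorem IsPolyFun.exists_polynomial {f : ℕ+ → ℕ+} (hf : IsPolyFun f) :
    ∃ P : ℕ[X], ∀ x, (f x : ℕ) = P.eval (x : ℕ) := by
  obtain ⟨n, a, ha⟩ := hf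
  exact ⟨∑ i ∈ Finset.range (n + 1), C (a i) * X ^ i, fun x => by simp [ha, eval_finsetSum]⟩

theorem Polynomial.eval_modEq (P : ℕ[X]) {n a b : ℕ} (h : a ≡ b [MOD n]) :
    P.eval a ≡ P.eval b [MOD n] := by
  rw [← ZMod.natCast_eq_natCast_iff] at h ⊢
  simpa [eval_natCast_map] using congrArg (P.map (Nat.castRingHom (ZMod n))).eval h

theorem Polynomial.eval_pos {P : ℕ[X]} (hP : P ≠ 0) {y : ℕ} (hy : 0 < y) : 0 < P.eval y := by
  obtain ⟨n, hn⟩ := support_nonempty.mpr hP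
  rw [eval_eq_sum, sum_def]
  exact Finset.sum_pos' (fun _ _ => Nat.zero_le _)
    ⟨n, hn, Nat.mul_pos (Nat.pos_of_ne_zero (mem_support_iff.mp hn)) (pow_pos hy n)⟩

theorem Polynomial.exists_eq_X_pow_mul_C_add_X_mul {R : Type*} [Semiring R] {P : R[X]}
    (hP : 1 < P.support.card) : ∃ j c Q, c ≠ 0 ∧ Q ≠ 0 ∧ P = X ^ j * (C c + X * Q) := by
  have hP0 : P ≠ 0 := by
    rintro rfl
    simp at hP
  set j := P.natTrailingDegree
  obtain ⟨S, hS⟩ : X ^ j ∣ P :=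
    X_pow_dvd_iff.mpr fun d hd => coeff_eq_zero_of_lt_natTrailingDegree hd
  have hS0 : S.coeff 0 ≠ 0 := by
    have hcoeff : S.coeff 0 = P.coeff j := by
      rw [hS, coeff_X_pow_mul', if_pos le_rfl, Nat.sub_self]
    exact hcoeff ▸ mt trailingCoeff_eq_zero.mp hP0
  have hPS : P = X ^ j * (C (S.coeff 0) + X * S.divX) := by
    conv_lhs => rw [hS, ← divX_mul_X_add S]
    rw [add_comm, X_mul]
  refine ⟨j, S.coeff 0, S.divX, hS0, fun hQ => ?_, hPS⟩
  have hmon : P = monomial j (S.coeff 0) := by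
    rw [hPS, hQ, mul_zero, add_zero, ← C_mul_X_pow_eq_monomial, X_pow_mul]
  exact hP.not_ge (card_support_le_one_iff_monomial.mpr ⟨j, _, hmon⟩)

theorem Polynomial.exists_prime_gt_dvd_eval {P : ℕ[X]} (hP : 1 < P.support.card) (N : ℕ) :
    ∃ q, N < q ∧ q.Prime ∧ ∃ y, ¬ q ∣ y ∧ q ∣ P.eval y := by
  obtain ⟨j, c, R, hc, hR, rfl⟩ := exists_eq_X_pow_mul_C_add_X_mul hP
  set L := (N + c).factorial
  set y := c * L
  set m := 1 + L * R.eval y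
  have hL : 0 < L := Nat.factorial_pos _
  have hy : 0 < y := Nat.mul_pos (Nat.pos_of_ne_zero hc) hL
  have hm : 1 < m := Nat.lt_add_of_pos_right (Nat.mul_pos hL (R.eval_pos hR hy))
  have hval : (X ^ j * (C c + X * R)).eval y = y ^ j * c * m := by
    simp only [eval_mul, eval_pow, eval_X, eval_add, eval_C, y, m]
    ring
  set q := m.minFac
  have hq : q.Prime := Nat.minFac_prime hm.ne'
  have hqL : ¬ q ∣ L := fun h =>
    hq.one_lt.ne' (Nat.dvd_one.mp ((Nat.dvd_add_left (h.mul_right _)).mp (Nat.minFac_dvd m)))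
  have hNq : N + c < q := not_le.mp fun h => hqL (Nat.dvd_factorial hq.pos h)
  refine ⟨q, by omega, hq, y, ?_, ?_⟩
  · rw [hq.dvd_mul]
    rintro (h | h)
    · exact Nat.not_dvd_of_pos_of_lt (Nat.pos_of_ne_zero hc) (by omega) h
    · exact hqL h
  · rw [hval]
    exact dvd_mul_of_dvd_right (Nat.minFac_dvd m) _

theorem Polynomial.exists_not_dvd_eval {P : ℕ[X]} {q : ℕ} (hq : q.Prime)
    (hdeg : P.natDegree + 1 < q) {i : ℕ} (hi : ¬ q ∣ P.coeff i) :
    ∃ x, ¬ q ∣ x ∧ ¬ q ∣ P.eval x := by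
  have := Fact.mk hq
  set P' := P.map (Nat.castRingHom (ZMod q))
  have hP' : P' ≠ 0 := fun h => hi <| by
    simpa [P', ZMod.natCast_eq_zero_iff] using congrArg (coeff · i) h
  have hdeg' : (X * P').natDegree < Cardinal.mk (ZMod q) := by
    rw [Cardinal.mk_fintype, ZMod.card, Nat.cast_lt]
    calc (X * P').natDegree ≤ 1 + P.natDegree :=
          (natDegree_mul_le).trans (add_le_add natDegree_X_le natDegree_map_le)
      _ < q := by omega
  obtain ⟨u, hu⟩ := exists_eval_ne_zero_of_natDegree_lt_card _ (mul_ne_zero X_ne_zero hP') hdeg'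
  rw [eval_mul, eval_X, mul_ne_zero_iff, ← ZMod.natCast_zmod_val u, eval_natCast_map,
    Nat.coe_castRingHom] at hu
  simpa only [← ZMod.natCast_eq_zero_iff] using ⟨u.val, hu⟩

theorem pow_mul_discontinuous (k : ℕ+) (f : ℕ+ → ℕ+) (hf : IsPolyFun f)
    (hfd : ¬ Continuous[tauM, tauM] f) :
    ¬ Continuous[tauM, tauM] (fun x : ℕ+ => x ^ (k : ℕ) * f x) := by
  obtain ⟨P, hP⟩ := hf.exists_polynomial
  have hsupp : 1 < P.support.card := by
    by_contra! h
    obtain ⟨j, c, rfl⟩ := card_support_le_one_iff_monomial.mp h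
    exact hfd (continuous_of_coe_eq_mul_pow fun x => by rw [hP, eval_monomial])
  have hc : 0 < P.trailingCoeff := by
    refine Nat.pos_of_ne_zero (mt trailingCoeff_eq_zero.mp ?_)
    rintro rfl
    simp at hsupp
  obtain ⟨q, hqN, hq, y, hqy, hqPy⟩ :=
    exists_prime_gt_dvd_eval hsupp (P.natDegree + 1 + P.trailingCoeff)
  obtain ⟨x, hqx, hqPx⟩ := exists_not_dvd_eval (i := P.natTrailingDegree) hq (by omega)
    (Nat.not_dvd_of_pos_of_lt hc (by omega : P.trailingCoeff < q))
  let x' : ℕ+ := ⟨x, Nat.pos_of_ne_zero fun h => hqx (h ▸ dvd_zero q)⟩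
  refine not_continuous_of_dvd_of_modEq hq (x := x') ?_ hqy fun z hz => ?_
  · rw [PNat.mul_coe, PNat.pow_coe, hP, hq.dvd_mul, not_or]
    exact ⟨fun h => hqx (hq.dvd_of_dvd_pow h), hqPx⟩
  · rw [PNat.mul_coe, hP]
    exact dvd_mul_of_dvd_right ((P.eval_modEq hz).dvd_iff dvd_rfl |>.mpr hqPy) _
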